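/- arXiv:2303.14332 — 2 statements merged into one kernel-verified Lean document; each statement's English description precedes it below -/
import Mathlib

section
/- Let z : G → ℝ have mean z̄ over a finite set G, and let j ∈ G achieve the minimum of z with z(j) < z̄. If z' agrees with z except z'(j) = z(j) + ε for sufficiently small ε > 0 (specifically ε < 2(z̄ − z(j))·|G|/(|G|−1) when |G| > 1), then Var(z') < Var(z). -/
lemma sum_sq_sub_const {ι : Type*} (G : Finset ι) (f : ι → ℝ) (c : ℝ) :
    ∑ g ∈ G, (f g - c) ^ 2
      = (∑ g ∈ G, (f g) ^ 2) - 2 * c * (∑ g ∈ G, f g) + G.card * c ^ 2 := by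
  have : ∀ g ∈ G, (f g - c) ^ 2 = (f g) ^ 2 - 2 * c * f g + c ^ 2 := by
    intro g _; ring
  rw [Finset.sum_congr rfl this, Finset.sum_add_distrib, Finset.sum_sub_distrib,
    Finset.sum_const, ← Finset.mul_sum]
  push_cast; ring

/-- Raising the value of a minimizer `j` strictly below the mean by a
sufficiently small `ε > 0` (namely `ε < 2(z̄ - z j)·|G|/(|G|-1)`) strictly decreases
the population variance. -/
theorem simple_incentives_raise_min_decreases_variance
    {ι : Type*} [DecidableEq ι] (G : Finset ι) (hG : 2 ≤ G.card)
    (z : ι → ℝ) (j : ι) (hj : j ∈ G)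
    (hmin : ∀ g ∈ G, z j ≤ z g)
    (zbar : ℝ) (hzbar : zbar = (∑ g ∈ G, z g) / G.card)
    (hbelow : z j < zbar)
    (ε : ℝ) (hε : 0 < ε)
    (hεsmall : ε < 2 * (zbar - z j) * G.card / (G.card - 1))
    (z' : ι → ℝ) (hz' : ∀ g, z' g = if g = j then z j + ε else z g) :
    (1 / (G.card : ℝ)) *
        ∑ g ∈ G, (z' g - (∑ h ∈ G, z' h) / G.card) ^ 2
      < (1 / (G.card : ℝ)) * ∑ g ∈ G, (z g - zbar) ^ 2 := by
  set n : ℝ := (G.card : ℝ) with hn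
  have hn2 : (2 : ℝ) ≤ n := by rw [hn]; exact_mod_cast hG
  have hnpos : (0 : ℝ) < n := by linarith
  have hn1 : (0 : ℝ) < n - 1 := by linarith
  set S : ℝ := ∑ g ∈ G, z g with hS
  -- sum of z'
  have hsum' : ∑ g ∈ G, z' g = S + ε := by
    have : ∀ g ∈ G, z' g = z g + (if g = j then ε else 0) := by
      intro g _; rw [hz' g]; split <;> simp_all
    rw [Finset.sum_congr rfl this, Finset.sum_add_distrib,
      Finset.sum_ite_eq' G j (fun _ => ε), if_pos hj]
  -- sum of squares of z'
  have hsq' : ∑ g ∈ G, (z' g) ^ 2 = (∑ g ∈ G, (z g) ^ 2) + (2 * ε * z j + ε ^ 2) := by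
    have : ∀ g ∈ G, (z' g) ^ 2 = (z g) ^ 2 + (if g = j then 2 * ε * z j + ε ^ 2 else 0) := by
      intro g _; rw [hz' g]; split
      · subst ‹g = j›; ring
      · simp
    rw [Finset.sum_congr rfl this, Finset.sum_add_distrib,
      Finset.sum_ite_eq' G j (fun _ => 2 * ε * z j + ε ^ 2), if_pos hj]
  have key : ε * (n - 1) < 2 * (zbar - z j) * n := by
    have := (lt_div_iff₀ hn1).mp hεsmall
    linarith
  have hzb : zbar * n = S := by
    rw [hzbar]; field_simp
  apply mul_lt_mul_of_pos_left _ (by positivity : (0:ℝ) < 1 / n)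
  rw [sum_sq_sub_const, sum_sq_sub_const, hsum', hsq']
  rw [show ((G.card : ℝ)) = n from rfl]
  have h1 : n * ((S + ε) / n) ^ 2 = (S + ε) ^ 2 / n := by field_simp
  have h2 : 2 * ((S + ε) / n) * (S + ε) = 2 * (S + ε) ^ 2 / n := by ring
  rw [h1, h2, ← hS]
  have key2 : 2 * ε * z j * n + (n - 1) * ε ^ 2 < 2 * S * ε := by
    nlinarith [key, hzb, hε]
  have hne : n ≠ 0 := ne_of_gt hnpos
  have final : ∀ A : ℝ, A + (2 * ε * z j + ε ^ 2) - 2 * (S + ε) ^ 2 / n + (S + ε) ^ 2 / n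
      < A - 2 * zbar * S + n * zbar ^ 2 := by
    intro A
    rw [hzbar]
    have hdiff : (A + (2 * ε * z j + ε ^ 2) - 2 * (S + ε) ^ 2 / n + (S + ε) ^ 2 / n)
        - (A - 2 * (S / n) * S + n * (S / n) ^ 2)
        = (2 * ε * z j * n + (n - 1) * ε ^ 2 - 2 * S * ε) / n := by
      field_simp
      ring
    have hneg : (2 * ε * z j * n + (n - 1) * ε ^ 2 - 2 * S * ε) / n < 0 :=
      div_neg_of_neg_of_pos (by linarith) hnpos
    linarith [hdiff ▸ hneg]
  exact final _
end

section
/- Driver-min fairness theorem (abstract version): Let each vehicle i have normalized income z_i ∈ [0,1] with mean z̄, and define the SID(+) score s_δ(i, r) = s(i, r) + δ·max(z̄ − z_i, 0)·R(i, r), where 0 ≤ s(i,r) ≤ M and rewards R(i,r) > 0 for feasible pairs. Fix a worse-off driver j (z_j < z̄) whose strictly highest-reward feasible request is r_j* (R(j, r_j*) > R(j, r) for all other feasible r). Suppose no other worse-off driver can serve r_j*. Then there exists δ̄ such that for all δ > δ̄, every matching maximizing total s_δ-score assigns r_j* to driver j; consequently j's income increase under A(δ) is R(j, r_j*), which strictly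 exceeds j's income increase under any s_0-optimal matching that is driver-min-unfair for j (i.e., that assigns j a request other than r_j*). -/
/-- A matching assigns each vehicle at most one feasible request, and no request
to more than one vehicle. -/
def ValidMatching {V R : Type*} (feas : V → Finset R) (m : V → Option R) : Prop :=
  (∀ i r, m i = some r → r ∈ feas i) ∧
  (∀ i j r, m i = some r → m j = some r → i = j)

/-- Total score of a matching under a per-pair score; the null action scores 0. -/
def totalScore {V R : Type*} [Fintype V] (s : V → R → ℝ) (m : V → Option R) : ℝ :=
  ∑ i : V, Option.elim (m i) 0 (s i)

/-- Driver-min fairness for SID(+). For a worse-off driver `j` whose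
strictly highest-reward feasible request `r_j*` cannot be served by any other
worse-off driver, there is `δ̄` such that for all `δ > δ̄` every `s_δ`-optimal
matching assigns `r_j*` to `j`; and `j`'s income increase `rew j r_j*` strictly
exceeds the increase `rew j r₀` obtained under any `s_0`-optimal matching that is
driver-min-unfair for `j` (i.e., assigns `j` some request `r₀ ≠ r_j*`). -/
theorem simple_incentives_driver_min_fairness
    {V R : Type*} [Fintype V] [Fintype R]
    (feas : V → Finset R) (s : V → R → ℝ) (rew : V → R → ℝ)
    (M : ℝ) (hsbd : ∀ i r, 0 ≤ s i r ∧ s i r ≤ M)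
    (z : V → ℝ) (hz01 : ∀ i, 0 ≤ z i ∧ z i ≤ 1)
    (zbar : ℝ) (hzbar : zbar = (∑ i : V, z i) / Fintype.card V)
    (hrewpos : ∀ i r, r ∈ feas i → 0 < rew i r)
    (j : V) (hworse : z j < zbar)
    (rstar : R) (hfeas : rstar ∈ feas j)
    (hbest : ∀ r ∈ feas j, r ≠ rstar → rew j r < rew j rstar)
    (honly : ∀ k : V, k ≠ j → rstar ∈ feas k → zbar ≤ z k) :
    (∃ δbar : ℝ, 0 ≤ δbar ∧ ∀ δ : ℝ, δbar < δ →
      ∀ m : V → Option R, ValidMatching feas m →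
        (∀ m' : V → Option R, ValidMatching feas m' →
          totalScore (fun i r => s i r + δ * max (zbar - z i) 0 * rew i r) m'
            ≤ totalScore (fun i r => s i r + δ * max (zbar - z i) 0 * rew i r) m) →
        m j = some rstar)
    ∧ (∀ m0 : V → Option R, ValidMatching feas m0 →
        (∀ m' : V → Option R, ValidMatching feas m' →
          totalScore s m' ≤ totalScore s m0) →
        ∀ r₀ : R, m0 j = some r₀ → r₀ ≠ rstar → rew j r₀ < rew j rstar) := by
  classical
  constructor
  · -- main part
    set c : ℝ := zbar - z j with hc
    have hc0 : 0 < c := by simp only [hc]; linarith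
    have hM : 0 ≤ M := le_trans (hsbd j rstar).1 (hsbd j rstar).2
    -- gap g
    set G : Finset ℝ :=
      insert (rew j rstar) (((feas j).erase rstar).image (fun r => rew j rstar - rew j r))
      with hG
    have hGne : G.Nonempty := ⟨rew j rstar, Finset.mem_insert_self _ _⟩
    set g : ℝ := G.min' hGne with hgdef
    have hg0 : 0 < g := by
      rw [hgdef, Finset.lt_min'_iff]
      intro y hy
      rw [hG, Finset.mem_insert] at hy
      rcases hy with h | h
      · rw [h]; exact hrewpos j rstar hfeas
      · rcases Finset.mem_image.1 h with ⟨r, hr, hry⟩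
        rw [Finset.mem_erase] at hr
        have := hbest r hr.2 hr.1
        rw [← hry]; linarith
    have hgr : g ≤ rew j rstar := Finset.min'_le _ _ (Finset.mem_insert_self _ _)
    have hgle : ∀ r ∈ feas j, r ≠ rstar → g ≤ rew j rstar - rew j r := by
      intro r hr hrne
      exact Finset.min'_le _ _ (Finset.mem_insert_of_mem
        (Finset.mem_image_of_mem _ (Finset.mem_erase.2 ⟨hrne, hr⟩)))
    refine ⟨max 0 (2 * M / (c * g)), le_max_left _ _, ?_⟩
    intro δ hδ m hm hopt
    by_contra hne
    have hcg : 0 < c * g := mul_pos hc0 hg0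
    have hδ0 : 0 < δ := lt_of_le_of_lt (le_max_left _ _) hδ
    have hkey : 2 * M < δ * (c * g) := by
      have h1 : 2 * M / (c * g) < δ := lt_of_le_of_lt (le_max_right _ _) hδ
      rw [div_lt_iff₀ hcg] at h1
      linarith
    set f : V → R → ℝ := fun i r => s i r + δ * max (zbar - z i) 0 * rew i r with hf
    set m' : V → Option R :=
      fun i => if i = j then some rstar else if m i = some rstar then none else m i with hm'def
    have hm'j : m' j = some rstar := by simp [hm'def]
    have hm' : ValidMatching feas m' := by
      constructor
      · intro i r hir
        by_cases hij : i = j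
        · subst hij
          rw [hm'j] at hir
          rw [Option.some_inj] at hir
          rw [← hir]; exact hfeas
        · simp only [hm'def, if_neg hij] at hir
          by_cases his : m i = some rstar
          · rw [if_pos his] at hir; exact absurd hir (by simp)
          · rw [if_neg his] at hir; exact hm.1 i r hir
      · intro a b r ha hb
        by_cases haj : a = j <;> by_cases hbj : b = j
        · rw [haj, hbj]
        · subst haj
          rw [hm'j, Option.some_inj] at ha
          simp only [hm'def, if_neg hbj] at hb
          by_cases hbs : m b = some rstar
          · rw [if_pos hbs] at hb; exact absurd hb (by simp)
          · rw [if_neg hbs] at hb; rw [← ha] at hb; exact absurd hb hbs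
        · subst hbj
          rw [hm'j, Option.some_inj] at hb
          simp only [hm'def, if_neg haj] at ha
          by_cases has : m a = some rstar
          · rw [if_pos has] at ha; exact absurd ha (by simp)
          · rw [if_neg has] at ha; rw [← hb] at ha; exact absurd ha has
        · simp only [hm'def, if_neg haj, if_neg hbj] at ha hb
          by_cases has : m a = some rstar
          · rw [if_pos has] at ha; exact absurd ha (by simp)
          · rw [if_neg has] at ha
            by_cases hbs : m b = some rstar
            · rw [if_pos hbs] at hb; exact absurd hb (by simp)
            · rw [if_neg hbs] at hb; exact hm.2 a b r ha hb
    have hle := hopt m' hm'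
    -- the difference function
    set d : V → ℝ := fun i => Option.elim (m' i) 0 (f i) - Option.elim (m i) 0 (f i) with hd
    have hdiff : totalScore f m' - totalScore f m = ∑ i : V, d i := by
      rw [totalScore, totalScore, ← Finset.sum_sub_distrib]
    have hmaxj : max (zbar - z j) 0 = c := by
      rw [hc]; exact max_eq_left (le_of_lt hc0)
    have hfj : f j rstar = s j rstar + δ * c * rew j rstar := by
      simp only [hf, hmaxj]
    -- bound on d j
    have hdj : δ * (c * g) - M ≤ d j := by
      have hdjval : d j = f j rstar - Option.elim (m j) 0 (f j) := by
        simp only [hd, hm'j, Option.elim]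
      rw [hdjval]
      cases hmj : m j with
      | none =>
        simp only [Option.elim]
        have h1 : δ * (c * g) ≤ δ * c * rew j rstar := by
          rw [mul_assoc]
          exact mul_le_mul_of_nonneg_left
            (mul_le_mul_of_nonneg_left hgr (le_of_lt hc0)) (le_of_lt hδ0)
        have h2 : 0 ≤ s j rstar := (hsbd j rstar).1
        rw [hfj]; linarith
      | some r =>
        have hrfeas : r ∈ feas j := hm.1 j r hmj
        have hrne : r ≠ rstar := by
          intro h; rw [h] at hmj; exact hne hmj
        have hfr : f j r = s j r + δ * c * rew j r := by
          simp only [hf, hmaxj]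
        simp only [Option.elim]
        have h1 : δ * (c * g) ≤ δ * c * (rew j rstar - rew j r) := by
          rw [mul_assoc]
          exact mul_le_mul_of_nonneg_left
            (mul_le_mul_of_nonneg_left (hgle r hrfeas hrne) (le_of_lt hc0)) (le_of_lt hδ0)
        have h2 : 0 ≤ s j rstar := (hsbd j rstar).1
        have h3 : s j r ≤ M := (hsbd j r).2
        rw [hfj, hfr]; nlinarith
    -- contradiction: total score of m' strictly exceeds that of m
    have hpos : 0 < ∑ i : V, d i := by
      by_cases hek : ∃ k, m k = some rstar
      · obtain ⟨k, hk⟩ := hek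
        have hkj : k ≠ j := by intro h; rw [h] at hk; exact hne hk
        have hkfeas : rstar ∈ feas k := hm.1 k rstar hk
        have hzk : zbar ≤ z k := honly k hkj hkfeas
        have hmaxk : max (zbar - z k) 0 = 0 := max_eq_right (by linarith)
        have hm'k : m' k = none := by simp [hm'def, hkj, hk]
        have hdk : d k = -(s k rstar) := by
          simp only [hd, hm'k, hk, Option.elim, hf, hmaxk]
          ring
        have hsum : ∑ i : V, d i = d j + d k := by
          apply Finset.sum_eq_add_of_mem j k (Finset.mem_univ _) (Finset.mem_univ _)
            (Ne.symm hkj)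
          intro i _ hi
          have hij : i ≠ j := hi.1
          have hik : i ≠ k := hi.2
          have his : m i ≠ some rstar := by
            intro h; exact hik (hm.2 i k rstar h hk)
          simp only [hd, hm'def, if_neg hij, if_neg his, sub_self]
        rw [hsum, hdk]
        have hsk : s k rstar ≤ M := (hsbd k rstar).2
        linarith
      · have hsum : ∑ i : V, d i = d j := by
          apply Finset.sum_eq_single_of_mem j (Finset.mem_univ _)
          intro i _ hij
          have his : m i ≠ some rstar := fun h => hek ⟨i, h⟩
          simp only [hd, hm'def, if_neg hij, if_neg his, sub_self]
        rw [hsum]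
        linarith
    rw [← hdiff] at hpos
    linarith
  · intro m0 hm0 _ r₀ h0 hr0ne
    exact hbest r₀ (hm0.1 j r₀ h0) hr0ne
end
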